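/- Let ψ ∈ C¹([0,∞);[0,∞)) and set Φ(v) := ψ(|v|²); assume C_Φ := ∫ e^{-Φ} dv < ∞ and 0 < ∫_{ℝ^d} |∇Φ(v)|² μ₂(dv) < ∞. Let U : ℝ^d → [0,∞) be measurable with C_U := ∫ e^{-U} dx < ∞ and suppose μ₁ satisfies the Poincaré inequality with constant c₁ > 0: for every h ∈ C¹_b(ℝ^d), ∫ h² dμ₁ − (∫ h dμ₁)² ≤ c₁ ∫ |∇h|² dμ₁. Then for every g ∈ C¹_b(ℝ^d) with ∫ g dμ₁ = 0: ∫_{ℝ^d} g(x)² μ₁(dx) ≤ ( c₁ d / ∫_{ℝ^d} |∇Φ|² dμ₂ ) ∫_{ℝ^d} ∫_{ℝ^d} ⟨∇Φ(v), ∇g(x)⟩² μ₂(dv) μ₁(dx). (Macroscopic coercivity for the kinetic transport operator.) -/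

import Mathlib

open MeasureTheory Real Filter Topology Set
open scoped RealInnerProductSpace

noncomputable section

/-- `d`-dimensional Euclidean space. -/
abbrev E (d : ℕ) : Type := EuclideanSpace ℝ (Fin d)

/-- The probability measure `μ₁` with density proportional to `e^{-U}`. -/
def mu1 (d : ℕ) (U : E d → ℝ) : Measure (E d) :=
  volume.withDensity fun x =>
    ENNReal.ofReal (Real.exp (-(U x)) / ∫ y : E d, Real.exp (-(U y)))

/-- The probability measure `μ₂` with density proportional to `e^{-Φ}`. -/
def mu2 (d : ℕ) (Φ : E d → ℝ) : Measure (E d) :=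
  volume.withDensity fun v =>
    ENNReal.ofReal (Real.exp (-(Φ v)) / ∫ w : E d, Real.exp (-(Φ w)))

/-!
By the Poincaré inequality for `μ₁`, `∫ g² dμ₁ ≤ c₁ ∫ |∇g|² dμ₁`, so it suffices to show
`∫ ⟨∇Φ(v), u⟩² μ₂(dv) = (∫ |∇Φ|² dμ₂ / d) |u|²` for every `u`. Since `Φ` is radial, `μ₂` is
invariant and `∇Φ` is equivariant under every linear isometry; a reflection carries `u` to any
vector of the same length, so the left side depends only on `|u|`, and summing over an orthonormal
basis identifies the constant.
-/

open scoped ENNReal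

theorem MeasureTheory.MeasurePreserving.withDensity_of_comp_eq {α : Type*} [MeasurableSpace α]
    {μ : Measure α} {e : α → α} (he : MeasurePreserving e μ μ) (he_emb : MeasurableEmbedding e)
    {ρ : α → ℝ≥0∞} (hρ : ∀ x, ρ (e x) = ρ x) :
    MeasurePreserving e (μ.withDensity ρ) (μ.withDensity ρ) := by
  refine ⟨he.measurable, Measure.ext fun s hs => ?_⟩
  rw [Measure.map_apply he.measurable hs, withDensity_apply _ hs,
    withDensity_apply _ (he.measurable hs), ← he.setLIntegral_comp_preimage_emb he_emb ρ s]
  simp only [hρ]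

-- No differentiability is needed: where `f` is not differentiable, both sides are `0`.
theorem gradient_apply_map_of_comp_eq {V : Type*} [NormedAddCommGroup V] [InnerProductSpace ℝ V]
    [CompleteSpace V] {f : V → ℝ} (R : V ≃ₗᵢ[ℝ] V) (hf : ∀ v, f (R v) = f v) (v : V) :
    gradient f (R v) = R (gradient f v) := by
  have hfR : f ∘ R.symm = f :=
    funext fun w => by rw [Function.comp_apply, ← hf (R.symm w), R.apply_symm_apply]
  have hderiv : fderiv ℝ f (R v) = (fderiv ℝ f v).comp (R.symm : V →L[ℝ] V) := by
    simpa [hfR] using R.symm.toContinuousLinearEquiv.comp_right_fderiv (f := f) (x := R v)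
  refine ext_inner_right ℝ fun w => ?_
  rw [R.inner_map_eq_flip]
  simp only [gradient, InnerProductSpace.toDual_symm_apply, hderiv]
  rfl

section Isotropy

variable {V : Type*} [NormedAddCommGroup V] [InnerProductSpace ℝ V] [MeasurableSpace V]
  [BorelSpace V] {μ : Measure V} {F : V → V}

theorem integral_inner_sq_eq_of_norm_eq (hμ : ∀ R : V ≃ₗᵢ[ℝ] V, MeasurePreserving R μ μ)
    (hF : ∀ (R : V ≃ₗᵢ[ℝ] V) v, F (R v) = R (F v)) {u w : V} (huw : ‖u‖ = ‖w‖) :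
    ∫ v, ⟪F v, u⟫ ^ 2 ∂μ = ∫ v, ⟪F v, w⟫ ^ 2 ∂μ := by
  set R := (ℝ ∙ (u - w))ᗮ.reflection
  have hRu : R u = w := Submodule.reflection_sub huw
  have hinner : ∀ v, ⟪F v, w⟫ = ⟪F (R.symm v), u⟫ := fun v => by
    rw [← hRu, hF, R.symm.inner_map_eq_flip, R.symm_symm]
  simp_rw [hinner]
  exact ((hμ R.symm).integral_comp R.symm.toHomeomorph.measurableEmbedding
    (fun v => ⟪F v, u⟫ ^ 2)).symm

theorem finrank_mul_integral_inner_sq [FiniteDimensional ℝ V]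
    (hμ : ∀ R : V ≃ₗᵢ[ℝ] V, MeasurePreserving R μ μ)
    (hF : ∀ (R : V ≃ₗᵢ[ℝ] V) v, F (R v) = R (F v)) (hFm : AEStronglyMeasurable F μ)
    (hFi : Integrable (fun v => ‖F v‖ ^ 2) μ) (u : V) :
    Module.finrank ℝ V * ∫ v, ⟪F v, u⟫ ^ 2 ∂μ = ‖u‖ ^ 2 * ∫ v, ‖F v‖ ^ 2 ∂μ := by
  set b := stdOrthonormalBasis ℝ V
  have hint : ∀ i, Integrable (fun v => ⟪F v, b i⟫ ^ 2) μ := fun i =>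
    hFi.mono' ((hFm.inner aestronglyMeasurable_const).pow 2) (Eventually.of_forall fun v => by
      simpa [b.orthonormal.1 i, sq_abs] using
        pow_le_pow_left₀ (abs_nonneg _) (abs_real_inner_le_norm (F v) (b i)) 2)
  have hcoord : ∀ i, ∫ v, ⟪F v, u⟫ ^ 2 ∂μ = ‖u‖ ^ 2 * ∫ v, ⟪F v, b i⟫ ^ 2 ∂μ := fun i => by
    rw [integral_inner_sq_eq_of_norm_eq hμ hF (w := ‖u‖ • b i)
      (by simp [norm_smul, b.orthonormal.1 i]), ← integral_const_mul]
    simp only [real_inner_smul_right, mul_pow]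
  calc (Module.finrank ℝ V : ℝ) * ∫ v, ⟪F v, u⟫ ^ 2 ∂μ
      = ∑ i, ‖u‖ ^ 2 * ∫ v, ⟪F v, b i⟫ ^ 2 ∂μ := by simp [← hcoord]
    _ = ‖u‖ ^ 2 * ∫ v, ‖F v‖ ^ 2 ∂μ := by
      rw [← Finset.mul_sum, ← integral_finsetSum _ fun i _ => hint i]
      simp_rw [b.sum_sq_inner_left]

end Isotropy

theorem measurePreserving_mu2 {d : ℕ} {Φ : E d → ℝ} (R : E d ≃ₗᵢ[ℝ] E d)
    (hΦ : ∀ v, Φ (R v) = Φ v) : MeasurePreserving R (mu2 d Φ) (mu2 d Φ) :=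
  R.measurePreserving.withDensity_of_comp_eq R.toHomeomorph.measurableEmbedding
    fun v => by rw [hΦ]

theorem integral_inner_gradient_sq_mu2 {d : ℕ} {Φ : E d → ℝ}
    (hΦ : ∀ (R : E d ≃ₗᵢ[ℝ] E d) v, Φ (R v) = Φ v)
    (hΦmom : Integrable (fun v : E d => ‖gradient Φ v‖ ^ 2) (mu2 d Φ)) (u : E d) :
    d * ∫ v, ⟪gradient Φ v, u⟫ ^ 2 ∂(mu2 d Φ)
      = ‖u‖ ^ 2 * ∫ v, ‖gradient Φ v‖ ^ 2 ∂(mu2 d Φ) := by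
  have hmeas : Measurable (gradient Φ) :=
    (InnerProductSpace.toDual ℝ (E d)).symm.continuous.measurable.comp (measurable_fderiv ℝ Φ)
  simpa using finrank_mul_integral_inner_sq (fun R => measurePreserving_mu2 R (hΦ R))
    (fun R => gradient_apply_map_of_comp_eq R (hΦ R)) hmeas.aestronglyMeasurable hΦmom u

theorem statement6_general
    (d : ℕ) (hd : 0 < d)
    (ψ : ℝ → ℝ)
    (Φ : E d → ℝ) (hΦdef : ∀ v, Φ v = ψ (‖v‖ ^ 2))
    (hΦmom : Integrable (fun v : E d => ‖gradient Φ v‖ ^ 2) (mu2 d Φ))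
    (hΦpos : 0 < ∫ v, ‖gradient Φ v‖ ^ 2 ∂(mu2 d Φ))
    (U : E d → ℝ)
    (c₁ : ℝ)
    (hPoin : ∀ h : E d → ℝ, ContDiff ℝ 1 h → (∃ M, ∀ x, |h x| + ‖gradient h x‖ ≤ M) →
      (∫ x, h x ^ 2 ∂(mu1 d U)) - (∫ x, h x ∂(mu1 d U)) ^ 2
        ≤ c₁ * ∫ x, ‖gradient h x‖ ^ 2 ∂(mu1 d U)) :
    ∀ g : E d → ℝ, ContDiff ℝ 1 g → (∃ M, ∀ x, |g x| + ‖gradient g x‖ ≤ M) →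
      (∫ x, g x ∂(mu1 d U)) = 0 →
      ∫ x, g x ^ 2 ∂(mu1 d U)
        ≤ (c₁ * d / ∫ v, ‖gradient Φ v‖ ^ 2 ∂(mu2 d Φ))
            * ∫ x, (∫ v, ⟪gradient Φ v, gradient g x⟫ ^ 2 ∂(mu2 d Φ)) ∂(mu1 d U) := by
  intro g hg hgb hgmean
  set I := ∫ v, ‖gradient Φ v‖ ^ 2 ∂(mu2 d Φ)
  have hd0 : (d : ℝ) ≠ 0 := Nat.cast_ne_zero.mpr hd.ne'
  have hΦ : ∀ (R : E d ≃ₗᵢ[ℝ] E d) v, Φ (R v) = Φ v := fun R v => by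
    rw [hΦdef, hΦdef, R.norm_map]
  have hpoin := hPoin g hg hgb
  rw [hgmean, zero_pow two_ne_zero, sub_zero] at hpoin
  have hiso : ∀ x, ∫ v, ⟪gradient Φ v, gradient g x⟫ ^ 2 ∂(mu2 d Φ)
      = I / d * ‖gradient g x‖ ^ 2 := fun x => by
    rw [div_mul_eq_mul_div, eq_div_iff hd0, mul_comm, integral_inner_gradient_sq_mu2 hΦ hΦmom,
      mul_comm]
  calc ∫ x, g x ^ 2 ∂(mu1 d U) ≤ c₁ * ∫ x, ‖gradient g x‖ ^ 2 ∂(mu1 d U) := hpoin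
    _ = (c₁ * d / I) * (I / d * ∫ x, ‖gradient g x‖ ^ 2 ∂(mu1 d U)) := by
      field_simp [hΦpos.ne']
    _ = _ := by simp_rw [hiso, integral_const_mul]

/-- Macroscopic coercivity for the kinetic transport operator: if `μ₁` satisfies a
Poincaré inequality with constant `c₁`, then for every bounded `C¹` function `g` with
`∫ g dμ₁ = 0`,
`∫ g² dμ₁ ≤ (c₁ d / ∫ |∇Φ|² dμ₂) ∫∫ ⟨∇Φ(v), ∇g(x)⟩² μ₂(dv) μ₁(dx)`. -/
theorem statement6
    (d : ℕ) (hd : 0 < d)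
    (ψ : ℝ → ℝ) (hψ : ContDiffOn ℝ 1 ψ (Ici 0)) (hψ0 : ∀ r ∈ Ici (0 : ℝ), 0 ≤ ψ r)
    (Φ : E d → ℝ) (hΦdef : ∀ v, Φ v = ψ (‖v‖ ^ 2))
    (hCΦ : Integrable fun v : E d => Real.exp (-(Φ v)))
    (hΦmom : Integrable (fun v : E d => ‖gradient Φ v‖ ^ 2) (mu2 d Φ))
    (hΦpos : 0 < ∫ v, ‖gradient Φ v‖ ^ 2 ∂(mu2 d Φ))
    (U : E d → ℝ) (hUm : Measurable U) (hU0 : ∀ x, 0 ≤ U x)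
    (hCU : Integrable fun x : E d => Real.exp (-(U x)))
    (c₁ : ℝ) (hc₁ : 0 < c₁)
    (hPoin : ∀ h : E d → ℝ, ContDiff ℝ 1 h → (∃ M, ∀ x, |h x| + ‖gradient h x‖ ≤ M) →
      (∫ x, h x ^ 2 ∂(mu1 d U)) - (∫ x, h x ∂(mu1 d U)) ^ 2
        ≤ c₁ * ∫ x, ‖gradient h x‖ ^ 2 ∂(mu1 d U)) :
    ∀ g : E d → ℝ, ContDiff ℝ 1 g → (∃ M, ∀ x, |g x| + ‖gradient g x‖ ≤ M) →
      (∫ x, g x ∂(mu1 d U)) = 0 →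
      ∫ x, g x ^ 2 ∂(mu1 d U)
        ≤ (c₁ * d / ∫ v, ‖gradient Φ v‖ ^ 2 ∂(mu2 d Φ))
            * ∫ x, (∫ v, ⟪gradient Φ v, gradient g x⟫ ^ 2 ∂(mu2 d Φ)) ∂(mu1 d U) :=
  statement6_general d hd ψ Φ hΦdef hΦmom hΦpos U c₁ hPoin
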